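/- Every word u over {1,2} satisfies exactly one of the following: u begins with the digit 1; u has at least two distinct covers below it in the Young–Fibonacci order (i.e., at least two words that u covers); u = 2; or u = ε. -/

import Mathlib

inductive YFDigit : Type
  | one : YFDigit
  | two : YFDigit
  deriving DecidableEq, Repr

abbrev YFWord := List YFDigit

namespace YFWord

/-- value of a digit -/
def digitVal : YFDigit → ℕ
  | .one => 1
  | .two => 2

/-- digit sum of a word -/
def dsum (v : YFWord) : ℕ := (v.map digitVal).sum

/-- number of 2's in a word -/
def twos (v : YFWord) : ℕ := v.count YFDigit.two

/-- longest common prefix of two lists -/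
def commonPrefix : YFWord → YFWord → YFWord
  | a :: x, b :: y => if a = b then a :: commonPrefix x y else []
  | _, _ => []

/-- longest common suffix -/
def lcs (x y : YFWord) : YFWord := (commonPrefix x.reverse y.reverse).reverse

/-- the prefix of `x` remaining after deleting the longest common suffix of `x` and `y` -/
def rem (x y : YFWord) : YFWord := x.take (x.length - (lcs x y).length)

/-- the Young–Fibonacci order: x ≤ y iff, after removing the longest common suffix,
the remaining prefix of `y` has at least as many 2's as the remaining prefix of `x` has digits -/
def yfLE (x y : YFWord) : Prop := (rem x y).length ≤ twos (rem y x)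

/-- strict Young–Fibonacci order -/
def yfLT (x y : YFWord) : Prop := yfLE x y ∧ ¬ yfLE y x

/-- `y` covers `x` in the Young–Fibonacci order -/
def covers (x y : YFWord) : Prop := yfLT x y ∧ ∀ z, ¬ (yfLT x z ∧ yfLT z y)

end YFWord

open YFWord

/-- `u` begins with the digit 1 -/
def startsWithOne (u : YFWord) : Prop := ∃ r : YFWord, u = YFDigit.one :: r

/-- `u` covers at least two distinct words -/
def hasTwoParentsBelow (u : YFWord) : Prop :=
  ∃ w₁ w₂ : YFWord, covers w₁ u ∧ covers w₂ u ∧ w₁ ≠ w₂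

/-! The digit sum `dsum = length + twos` is strictly monotone for the Young–Fibonacci order,
so any `x ≤ y` with `dsum y = dsum x + 1` is a cover. Everything below `1 :: r` is already
below `r`, so `r` is its only cover; the only cover of `[2]` is `[1]`, since `[] < [1] < [2]`;
and for `v ≠ []` the word `2 :: v` covers both `1 :: v` and `2 :: w`, where `w ≤ v` has
digit sum one less than `v`. -/

namespace YFWord

theorem commonPrefix_prefix_left : ∀ x y : YFWord, commonPrefix x y <+: x
  | a :: x, b :: y => by
    simp only [commonPrefix]
    split
    · exact List.cons_prefix_cons.2 ⟨rfl, commonPrefix_prefix_left x y⟩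
    · exact List.nil_prefix
  | [], _ => List.nil_prefix
  | _ :: _, [] => List.nil_prefix

theorem commonPrefix_comm : ∀ x y : YFWord, commonPrefix x y = commonPrefix y x
  | a :: x, b :: y => by
    by_cases h : a = b
    · subst h; simp [commonPrefix, commonPrefix_comm x y]
    · simp [commonPrefix, h, Ne.symm h]
  | [], [] | [], _ :: _ | _ :: _, [] => rfl

theorem prefix_commonPrefix {z : YFWord} :
    ∀ {x y : YFWord}, z <+: x → z <+: y → z <+: commonPrefix x y := by
  induction z with
  | nil => exact fun _ _ => List.nil_prefix
  | cons c z ih =>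
    rintro (_ | ⟨a, x⟩) (_ | ⟨b, y⟩) hx hy <;>
      simp only [List.prefix_nil, reduceCtorEq, List.cons_prefix_cons] at hx hy
    obtain ⟨rfl, hx⟩ := hx
    obtain ⟨rfl, hy⟩ := hy
    simpa [commonPrefix] using ih hx hy

theorem lcs_comm (x y : YFWord) : lcs x y = lcs y x := by
  rw [lcs, lcs, commonPrefix_comm]

theorem lcs_suffix_left (x y : YFWord) : lcs x y <:+ x := by
  simpa [lcs] using List.reverse_suffix.2 (commonPrefix_prefix_left x.reverse y.reverse)

theorem suffix_lcs {s x y : YFWord} (hx : s <:+ x) (hy : s <:+ y) : s <:+ lcs x y := by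
  simpa [lcs] using
    List.reverse_suffix.2 (prefix_commonPrefix (List.reverse_prefix.2 hx) (List.reverse_prefix.2 hy))

theorem rem_append_lcs (x y : YFWord) : rem x y ++ lcs x y = x := by
  obtain ⟨w, hw⟩ := lcs_suffix_left x y
  rw [rem]
  generalize lcs x y = L at hw ⊢
  subst hw
  simp

/-- `t` is the part of the longest common suffix of `p ++ s` and `q ++ s` lying beyond `s`. -/
theorem exists_rem_append_eq (p q s : YFWord) :
    ∃ t, rem (p ++ s) (q ++ s) ++ t = p ∧ rem (q ++ s) (p ++ s) ++ t = q := by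
  obtain ⟨t, ht⟩ := suffix_lcs (List.suffix_append p s) (List.suffix_append q s)
  have hp := rem_append_lcs (p ++ s) (q ++ s)
  have hq := rem_append_lcs (q ++ s) (p ++ s)
  rw [← ht, ← List.append_assoc] at hp
  rw [lcs_comm, ← ht, ← List.append_assoc] at hq
  exact ⟨t, List.append_cancel_right hp, List.append_cancel_right hq⟩

theorem twos_le_length (v : YFWord) : twos v ≤ v.length := List.count_le_length

theorem twos_append (v w : YFWord) : twos (v ++ w) = twos v + twos w := List.count_append

theorem yfLE_iff {x y : YFWord} :
    yfLE x y ↔ ∃ p q s : YFWord, x = p ++ s ∧ y = q ++ s ∧ p.length ≤ twos q := by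
  constructor
  · intro h
    refine ⟨rem x y, rem y x, lcs x y, (rem_append_lcs x y).symm, ?_, h⟩
    rw [lcs_comm]
    exact (rem_append_lcs y x).symm
  · rintro ⟨p, q, s, rfl, rfl, hpq⟩
    obtain ⟨t, hp, hq⟩ := exists_rem_append_eq p q s
    have hlen := congrArg List.length hp
    have htwos := congrArg twos hq
    rw [List.length_append] at hlen
    rw [twos_append] at htwos
    have := twos_le_length t
    rw [yfLE]
    omega

theorem yfLE.cons_two {w v : YFWord} (h : yfLE w v) : yfLE (.two :: w) (.two :: v) := by
  obtain ⟨p, q, s, rfl, rfl, hpq⟩ := yfLE_iff.1 h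
  exact yfLE_iff.2 ⟨.two :: p, .two :: q, s, rfl, rfl, by simpa [twos] using hpq⟩

theorem yfLE_of_yfLT_one_cons {w r : YFWord} (h : yfLT w (.one :: r)) : yfLE w r := by
  obtain ⟨p, q, s, rfl, hy, hpq⟩ := yfLE_iff.1 h.1
  cases q with
  | nil =>
    simp only [List.nil_append] at hy
    exact absurd (yfLE_iff.2 ⟨[], p, s, by simpa using hy, rfl, by simp⟩) h.2
  | cons d q =>
    obtain ⟨rfl, rfl⟩ := List.cons_eq_cons.1 hy
    exact yfLE_iff.2 ⟨p, q, s, rfl, rfl, by simpa [twos] using hpq⟩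

/-- Both inequalities force the two remainders to be words of 2's of the same length. -/
theorem yfLE_antisymm {x y : YFWord} (hxy : yfLE x y) (hyx : yfLE y x) : x = y := by
  rw [yfLE] at hxy hyx
  have := twos_le_length (rem x y)
  have := twos_le_length (rem y x)
  have all_two : ∀ v : YFWord, twos v = v.length → v = .replicate v.length .two := fun v hv =>
    List.eq_replicate_iff.2 ⟨rfl, fun b hb => (List.count_eq_length.1 hv b hb).symm⟩
  have hrem : rem x y = rem y x := by
    rw [all_two (rem x y) (by omega), all_two (rem y x) (by omega)]
    congr 1
    omega
  rw [← rem_append_lcs x y, hrem, lcs_comm, rem_append_lcs]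

theorem dsum_cons (a : YFDigit) (v : YFWord) : dsum (a :: v) = digitVal a + dsum v := by
  simp [dsum]

theorem dsum_eq_length_add_twos (v : YFWord) : dsum v = v.length + twos v := by
  induction v with
  | nil => rfl
  | cons a v ih => cases a <;> simp [dsum_cons, ih, twos, digitVal] <;> omega

theorem dsum_add_dsum_rem (x y : YFWord) :
    dsum x + dsum (rem y x) = dsum y + dsum (rem x y) := by
  have hx := congrArg dsum (rem_append_lcs x y)
  have hy := congrArg dsum (rem_append_lcs y x)
  simp only [dsum, List.map_append, List.sum_append] at hx hy
  rw [lcs_comm] at hy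
  simp only [dsum]
  omega

theorem dsum_le_of_yfLE {x y : YFWord} (h : yfLE x y) : dsum x ≤ dsum y := by
  have := dsum_add_dsum_rem x y
  rw [dsum_eq_length_add_twos (rem x y), dsum_eq_length_add_twos (rem y x)] at this
  have := twos_le_length (rem x y)
  have := twos_le_length (rem y x)
  rw [yfLE] at h
  omega

theorem dsum_lt_of_yfLT {x y : YFWord} (h : yfLT x y) : dsum x < dsum y := by
  obtain ⟨hxy, hyx⟩ := h
  have := dsum_add_dsum_rem x y
  rw [dsum_eq_length_add_twos (rem x y), dsum_eq_length_add_twos (rem y x)] at this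
  rw [yfLE] at hxy hyx
  omega

theorem covers_of_yfLE_of_dsum_eq {x y : YFWord} (h : yfLE x y) (hd : dsum y = dsum x + 1) :
    covers x y :=
  ⟨⟨h, fun h' => by have := dsum_le_of_yfLE h'; omega⟩, fun _ ⟨hxz, hzy⟩ => by
    have := dsum_lt_of_yfLT hxz
    have := dsum_lt_of_yfLT hzy
    omega⟩

theorem covers_one_cons (v : YFWord) : covers v (.one :: v) :=
  covers_of_yfLE_of_dsum_eq (yfLE_iff.2 ⟨[], [.one], v, rfl, rfl, by simp⟩)
    (by simp [dsum_cons, digitVal, add_comm])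

theorem covers_one_cons_two_cons (v : YFWord) : covers (.one :: v) (.two :: v) :=
  covers_of_yfLE_of_dsum_eq (yfLE_iff.2 ⟨[.one], [.two], v, rfl, rfl, by decide⟩)
    (by simp [dsum_cons, digitVal]; omega)

theorem eq_of_covers_one_cons {w r : YFWord} (h : covers w (.one :: r)) : w = r := by
  have hle := yfLE_of_yfLT_one_cons h.1
  by_contra hne
  exact h.2 r ⟨⟨hle, fun h' => hne (yfLE_antisymm hle h')⟩, (covers_one_cons r).1⟩

theorem eq_of_covers_two {w : YFWord} (h : covers w [.two]) : w = [.one] := by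
  have hd := dsum_lt_of_yfLT h.1
  have hlen : w.length ≤ 1 := by
    have : dsum [.two] = 2 := rfl
    have := dsum_eq_length_add_twos w
    omega
  match w, hlen with
  | [], _ => exact absurd ⟨(covers_one_cons []).1, (covers_one_cons_two_cons []).1⟩ (h.2 [.one])
  | [.one], _ => rfl
  | [.two], _ => exact absurd hd (by decide)
  | _ :: _ :: _, hlen => simp at hlen

/-- Drop a leading 1, or turn a leading 2 into a 1. -/
theorem exists_yfLE_dsum_eq {v : YFWord} (hv : v ≠ []) :
    ∃ w, yfLE w v ∧ dsum v = dsum w + 1 := by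
  rcases v with _ | ⟨_ | _, r⟩
  · exact absurd rfl hv
  · exact ⟨r, (covers_one_cons r).1.1, by simp [dsum_cons, digitVal, add_comm]⟩
  · exact ⟨.one :: r, (covers_one_cons_two_cons r).1.1, by simp [dsum_cons, digitVal]; omega⟩

theorem not_hasTwoParentsBelow_of_covers_eq {u a : YFWord} (h : ∀ w, covers w u → w = a) :
    ¬ hasTwoParentsBelow u :=
  fun ⟨_, _, h₁, h₂, hne⟩ => hne ((h _ h₁).trans (h _ h₂).symm)

theorem hasTwoParentsBelow_two_cons {v : YFWord} (hv : v ≠ []) :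
    hasTwoParentsBelow (.two :: v) := by
  obtain ⟨w, hwv, hd⟩ := exists_yfLE_dsum_eq hv
  refine ⟨.one :: v, .two :: w, covers_one_cons_two_cons v, ?_, by simp⟩
  exact covers_of_yfLE_of_dsum_eq hwv.cons_two (by simp [dsum_cons, digitVal, hd]; omega)

end YFWord

theorem yf_exactly_one_of_four (u : YFWord) :
    (startsWithOne u ∧ ¬ hasTwoParentsBelow u ∧ u ≠ [YFDigit.two] ∧ u ≠ []) ∨
    (¬ startsWithOne u ∧ hasTwoParentsBelow u ∧ u ≠ [YFDigit.two] ∧ u ≠ []) ∨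
    (¬ startsWithOne u ∧ ¬ hasTwoParentsBelow u ∧ u = [YFDigit.two] ∧ u ≠ []) ∨
    (¬ startsWithOne u ∧ ¬ hasTwoParentsBelow u ∧ u ≠ [YFDigit.two] ∧ u = []) := by
  rcases u with _ | ⟨_ | _, v⟩
  · have : ¬ hasTwoParentsBelow [] :=
      not_hasTwoParentsBelow_of_covers_eq (a := []) fun w h => by
        simpa [dsum] using dsum_lt_of_yfLT h.1
    simp [startsWithOne, this]
  · simp [startsWithOne, not_hasTwoParentsBelow_of_covers_eq fun _ => eq_of_covers_one_cons]
  · rcases eq_or_ne v [] with rfl | hv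
    · simp [startsWithOne, not_hasTwoParentsBelow_of_covers_eq fun _ => eq_of_covers_two]
    · simp [startsWithOne, hasTwoParentsBelow_two_cons hv, hv]
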